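/- Let X be a compact topological space and f: X → X a homeomorphism with two disjoint f-invariant subsets Δ₊ and Δ₋ (i.e. f(Δ₊)=Δ₊ and f(Δ₋)=Δ₋). If some positive power f^s (s ≥ 1) has generalized uniform North-South dynamics from Δ₋ to Δ₊, then f itself has generalized uniform North-South dynamics from Δ₋ to Δ₊. -/
import Mathlib


open Set Filter Topology

/-- `f` has generalized uniform North-South dynamics from `Δm` to `Δp`:
`Δp` and `Δm` are disjoint compact `f`-invariant sets, every compact set avoiding `Δm`
is uniformly attracted to any neighborhood of `Δp` under forward iteration, and every
compact set avoiding `Δp` is uniformly attracted to any neighborhood of `Δm` under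
backward iteration. -/
def GenUnifNS {X : Type*} [TopologicalSpace X] (f : X ≃ₜ X) (Δm Δp : Set X) : Prop :=
  Disjoint Δp Δm ∧ IsCompact Δp ∧ IsCompact Δm ∧
    (f '' Δp = Δp) ∧ (f '' Δm = Δm) ∧
    (∀ K : Set X, IsCompact K → K ⊆ Δmᶜ → ∀ U ∈ nhdsSet Δp,
      ∃ t₀ : ℕ, ∀ t ≥ t₀, (⇑f)^[t] '' K ⊆ U) ∧
    (∀ K : Set X, IsCompact K → K ⊆ Δpᶜ → ∀ V ∈ nhdsSet Δm,
      ∃ t₀ : ℕ, ∀ t ≥ t₀, (⇑f.symm)^[t] '' K ⊆ V)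

/-- the `n`-th power (iterate) of a homeomorphism -/
def homeoPow {X : Type*} [TopologicalSpace X] (f : X ≃ₜ X) : ℕ → X ≃ₜ X
  | 0 => Homeomorph.refl X
  | n + 1 => (homeoPow f n).trans f

lemma homeoPow_coe {X : Type*} [TopologicalSpace X] (f : X ≃ₜ X) (n : ℕ) :
    ⇑(homeoPow f n) = (⇑f)^[n] := by
  induction n with
  | zero => rfl
  | succ n ih =>
    ext x
    show f ((homeoPow f n) x) = _
    rw [ih]; exact (Function.iterate_succ_apply' (⇑f) n x).symm

lemma homeoPow_symm_coe {X : Type*} [TopologicalSpace X] (f : X ≃ₜ X) (n : ℕ) :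
    ⇑(homeoPow f n).symm = (⇑f.symm)^[n] := by
  induction n with
  | zero => rfl
  | succ n ih =>
    ext x
    show (homeoPow f n).symm (f.symm x) = _
    rw [ih]; exact (Function.iterate_succ_apply (⇑f.symm) n x).symm

lemma ns_aux {X : Type*} [TopologicalSpace X] (g : X → X) (hg : Continuous g)
    (Δ T : Set X) (hΔ : ∀ x, g x ∈ Δ ↔ x ∈ Δ) (s : ℕ) (hs : 1 ≤ s)
    (h : ∀ K : Set X, IsCompact K → K ⊆ Δᶜ → ∀ U ∈ nhdsSet T,
      ∃ t₀ : ℕ, ∀ t ≥ t₀, (g^[s])^[t] '' K ⊆ U) :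
    ∀ K : Set X, IsCompact K → K ⊆ Δᶜ → ∀ U ∈ nhdsSet T,
      ∃ t₀ : ℕ, ∀ t ≥ t₀, g^[t] '' K ⊆ U := by
  intro K hK hKΔ U hU
  have hit : ∀ j x, g^[j] x ∈ Δ ↔ x ∈ Δ := by
    intro j
    induction j with
    | zero => simp
    | succ j ih =>
      intro x
      rw [Function.iterate_succ', Function.comp_apply, hΔ, ih]
  set K' := ⋃ j ∈ Finset.range s, g^[j] '' K with hK'def
  have hK'c : IsCompact K' :=
    (Finset.range s).finite_toSet.isCompact_biUnion fun j _ => hK.image (hg.iterate j)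
  have hK'Δ : K' ⊆ Δᶜ := by
    intro x hx
    simp only [hK'def, mem_iUnion] at hx
    obtain ⟨j, -, y, hy, rfl⟩ := hx
    exact fun hmem => hKΔ hy ((hit j y).mp hmem)
  obtain ⟨t₀, ht⟩ := h K' hK'c hK'Δ U hU
  refine ⟨s * t₀, fun t htt => ?_⟩
  have hq : t₀ ≤ t / s := (Nat.le_div_iff_mul_le hs).mpr (mul_comm t₀ s ▸ htt)
  have h1 : g^[t] '' K ⊆ g^[s * (t / s)] '' K' := by
    have heq : g^[t] '' K = g^[s * (t / s)] '' (g^[t % s] '' K) := by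
      rw [← Set.image_comp, ← Function.iterate_add, Nat.div_add_mod]
    rw [heq]
    apply Set.image_mono
    intro x hx
    simp only [hK'def, mem_iUnion]
    exact ⟨t % s, Finset.mem_range.mpr (Nat.mod_lt t hs), hx⟩
  refine h1.trans ?_
  rw [Function.iterate_mul]
  exact ht (t / s) hq

/-- If a positive power `f^s` of a homeomorphism `f` of a compact space has generalized
uniform North-South dynamics from `Δm` to `Δp`, where `Δp`, `Δm` are disjoint
`f`-invariant sets, then `f` itself has generalized uniform North-South dynamics
from `Δm` to `Δp`. -/
theorem stmt0 {X : Type*} [TopologicalSpace X] [CompactSpace X]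
    (f : X ≃ₜ X) (Δp Δm : Set X)
    (hdisj : Disjoint Δp Δm)
    (hp : f '' Δp = Δp) (hm : f '' Δm = Δm)
    (s : ℕ) (hs : 1 ≤ s)
    (hNS : GenUnifNS (homeoPow f s) Δm Δp) :
    GenUnifNS f Δm Δp := by
  obtain ⟨-, hcp, hcm, -, -, hfwd, hbwd⟩ := hNS
  simp only [homeoPow_coe, homeoPow_symm_coe] at hfwd hbwd
  have memm : ∀ x, f x ∈ Δm ↔ x ∈ Δm := fun x => by
    conv_lhs => rw [← hm]
    exact f.injective.mem_set_image
  have memp : ∀ x, f x ∈ Δp ↔ x ∈ Δp := fun x => by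
    conv_lhs => rw [← hp]
    exact f.injective.mem_set_image
  have memps : ∀ x, f.symm x ∈ Δp ↔ x ∈ Δp := fun x => by
    conv_rhs => rw [← f.apply_symm_apply x]
    exact (memp (f.symm x)).symm
  refine ⟨hdisj, hcp, hcm, hp, hm, ?_, ?_⟩
  · exact ns_aux f f.continuous Δm Δp memm s hs hfwd
  · exact ns_aux f.symm f.symm.continuous Δp Δm memps s hs hbwd
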